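/- arXiv:2601.20456 — 4 statements merged into one kernel-verified Lean document; each statement's English description precedes it below -/
import Mathlib

section
/- Weak coercivity (Gårding inequality) of the drift–diffusion bilinear form: for every δ > ‖u‖_∞/(2 D̲) and every family of continuously differentiable functions ρ_i : [0, l_i] → ℝ (i = 1, …, N), one has ∑_{i=1}^{N} ∫_0^{l_i} ( D_i ρ_i'(x)² + u_i(x) ρ_i(x) ρ_i'(x) ) dx ≥ γ ‖ρ‖_{ℍ¹}² − λ ‖ρ‖_{𝕃²}², where γ = D̲ − ‖u‖_∞/(2δ) > 0 and λ = D̲ + (δ/2) ‖u‖_∞ > 0. -/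
open MeasureTheory Set

/-! Pointwise, Young's inequality gives `|u ρ ρ'| ≤ ‖u‖_∞ (δ/2 ρ² + ρ'²/(2δ))`, and `D_i ≥ D̲`;
integrating this over each edge and summing over the edges gives the estimate. The condition
`δ > ‖u‖_∞/(2D̲)` is exactly what makes `γ` positive. -/

lemma neg_mul_mul_le_young {a b c U δ : ℝ} (hδ : 0 < δ) (hc : |c| ≤ U) :
    -(c * a * b) ≤ δ / 2 * U * a ^ 2 + U / (2 * δ) * b ^ 2 := by
  have hab : |a| * |b| ≤ δ / 2 * a ^ 2 + 1 / (2 * δ) * b ^ 2 := by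
    have hsq : δ / 2 * a ^ 2 + 1 / (2 * δ) * b ^ 2 - |a| * |b| =
        (δ * |a| - |b|) ^ 2 / (2 * δ) := by
      rw [← sq_abs a, ← sq_abs b]; field_simp; ring
    linarith [div_nonneg (sq_nonneg (δ * |a| - |b|)) (by positivity : (0:ℝ) ≤ 2 * δ)]
  calc -(c * a * b) ≤ |c| * (|a| * |b|) := by
        rw [← abs_mul, ← abs_mul, ← mul_assoc]; exact neg_le_abs _
    _ ≤ U * (δ / 2 * a ^ 2 + 1 / (2 * δ) * b ^ 2) :=
        mul_le_mul hc hab (by positivity) ((abs_nonneg c).trans hc)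
    _ = δ / 2 * U * a ^ 2 + U / (2 * δ) * b ^ 2 := by ring

lemma garding_pointwise_le {a b c D Dl U δ : ℝ} (hD : Dl ≤ D) (hδ : 0 < δ) (hc : |c| ≤ U) :
    (Dl - U / (2 * δ)) * (a ^ 2 + b ^ 2) - (Dl + δ / 2 * U) * a ^ 2 ≤
      D * b ^ 2 + c * a * b := by
  have hU : 0 ≤ U / (2 * δ) := div_nonneg ((abs_nonneg c).trans hc) (by positivity)
  nlinarith [neg_mul_mul_le_young (a := a) (b := b) hδ hc,
    mul_nonneg hU (sq_nonneg a), mul_nonneg (sub_nonneg.mpr hD) (sq_nonneg b)]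

lemma intervalIntegrable_of_abs_le {u : ℝ → ℝ} {a b U : ℝ} (hab : a ≤ b) (hu : Measurable u)
    (huU : ∀ x ∈ Icc a b, |u x| ≤ U) : IntervalIntegrable u volume a b := by
  rw [intervalIntegrable_iff_integrableOn_Ioc_of_le hab]
  refine Measure.integrableOn_of_bounded (M := U) measure_Ioc_lt_top.ne
    hu.aestronglyMeasurable ((ae_restrict_iff' measurableSet_Ioc).mpr (ae_of_all _ ?_))
  exact fun x hx => huU x (Ioc_subset_Icc_self hx)

theorem garding_integral_le {ρ u : ℝ → ℝ} {a b D Dl U δ : ℝ} (hab : a ≤ b)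
    (hρ : ContDiff ℝ 1 ρ) (hu : Measurable u) (huU : ∀ x ∈ Icc a b, |u x| ≤ U) (hD : Dl ≤ D)
    (hδ : 0 < δ) :
    (Dl - U / (2 * δ)) * (∫ x in a..b, (ρ x ^ 2 + deriv ρ x ^ 2)) -
        (Dl + δ / 2 * U) * (∫ x in a..b, ρ x ^ 2) ≤
      ∫ x in a..b, (D * deriv ρ x ^ 2 + u x * ρ x * deriv ρ x) := by
  have hρc : Continuous ρ := hρ.continuous
  have hρ'c : Continuous (deriv ρ) := hρ.continuous_deriv le_rfl
  have hH1 : IntervalIntegrable (fun x => ρ x ^ 2 + deriv ρ x ^ 2) volume a b :=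
    ((hρc.pow 2).add (hρ'c.pow 2)).intervalIntegrable _ _
  have hL2 : IntervalIntegrable (fun x => ρ x ^ 2) volume a b :=
    (hρc.pow 2).intervalIntegrable _ _
  have hform : IntervalIntegrable (fun x => D * deriv ρ x ^ 2 + u x * ρ x * deriv ρ x)
      volume a b :=
    ((continuous_const.mul (hρ'c.pow 2)).intervalIntegrable _ _).add
      (((intervalIntegrable_of_abs_le hab hu huU).mul_continuousOn
        hρc.continuousOn).mul_continuousOn hρ'c.continuousOn)
  rw [← intervalIntegral.integral_const_mul, ← intervalIntegral.integral_const_mul,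
    ← intervalIntegral.integral_sub (hH1.const_mul _) (hL2.const_mul _)]
  exact intervalIntegral.integral_mono_on hab ((hH1.const_mul _).sub (hL2.const_mul _)) hform
    fun x hx => garding_pointwise_le hD hδ (huU x hx)

/-- **Weak coercivity (Gårding inequality) of the drift–diffusion bilinear form.**
For every δ > ‖u‖_∞/(2 D̲) and every family of C¹ functions ρ_i on [0, l_i],
`∑ᵢ ∫₀^{lᵢ} (Dᵢ ρᵢ'² + uᵢ ρᵢ ρᵢ') dx ≥ γ ‖ρ‖²_{ℍ¹} − λ ‖ρ‖²_{𝕃²}`,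
where `γ = D̲ − ‖u‖_∞/(2δ) > 0` and `λ = D̲ + (δ/2) ‖u‖_∞ > 0`. -/
theorem garding_inequality_bilinear_form
    (N : ℕ) (hN : 0 < N) (l D : Fin N → ℝ)
    (hl : ∀ i, 0 < l i) (hD : ∀ i, 0 < D i)
    (ρ : Fin N → ℝ → ℝ) (hρ : ∀ i, ContDiff ℝ 1 (ρ i))
    (u : Fin N → ℝ → ℝ)
    (hu_meas : ∀ i, Measurable (u i))
    (hu_bdd : ∀ i, BddAbove ((fun x => |u i x|) '' Icc 0 (l i)))
    (Dlow unorm : ℝ)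
    (hDlow : Dlow =
      Finset.univ.inf' (Finset.univ_nonempty_iff.mpr (Fin.pos_iff_nonempty.mp hN)) D)
    (hunorm : unorm = ∑ i, sSup ((fun x => |u i x|) '' Icc 0 (l i)))
    (δ : ℝ) (hδ : unorm / (2 * Dlow) < δ)
    (γ lam : ℝ)
    (hγ : γ = Dlow - unorm / (2 * δ))
    (hlam : lam = Dlow + (δ / 2) * unorm) :
    0 < γ ∧ 0 < lam ∧
      ∑ i, ∫ x in (0:ℝ)..(l i),
          (D i * (deriv (ρ i) x) ^ 2 + u i x * ρ i x * deriv (ρ i) x) ≥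
        γ * (∑ i, ∫ x in (0:ℝ)..(l i), ((ρ i x) ^ 2 + (deriv (ρ i) x) ^ 2)) -
          lam * (∑ i, ∫ x in (0:ℝ)..(l i), (ρ i x) ^ 2) := by
  have hu_le_sSup :
      ∀ i, ∀ x ∈ Icc 0 (l i), |u i x| ≤ sSup ((fun x => |u i x|) '' Icc 0 (l i)) :=
    fun i x hx => le_csSup (hu_bdd i) ⟨x, hx, rfl⟩
  have hsSup_nonneg : ∀ i, 0 ≤ sSup ((fun x => |u i x|) '' Icc 0 (l i)) :=
    fun i => (abs_nonneg _).trans (hu_le_sSup i 0 ⟨le_rfl, (hl i).le⟩)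
  have hu_le : ∀ i, ∀ x ∈ Icc 0 (l i), |u i x| ≤ unorm := fun i x hx =>
    (hu_le_sSup i x hx).trans (hunorm ▸ Finset.single_le_sum (fun j _ => hsSup_nonneg j)
      (Finset.mem_univ i))
  have hunorm_nonneg : 0 ≤ unorm := hunorm ▸ Finset.sum_nonneg fun i _ => hsSup_nonneg i
  have hDlow_le : ∀ i, Dlow ≤ D i := fun i => hDlow ▸ Finset.inf'_le D (Finset.mem_univ i)
  have hDlow_pos : 0 < Dlow := hDlow ▸ (Finset.lt_inf'_iff _).mpr fun i _ => hD i
  have hδ_pos : 0 < δ := (div_nonneg hunorm_nonneg (by positivity)).trans_lt hδ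
  refine ⟨?_, hlam ▸ by positivity, ?_⟩
  · rw [hγ, sub_pos, div_lt_iff₀ (by positivity)]
    rw [div_lt_iff₀ (by positivity)] at hδ
    linarith
  · rw [ge_iff_le, hγ, hlam, Finset.mul_sum, Finset.mul_sum, ← Finset.sum_sub_distrib]
    exact Finset.sum_le_sum fun i _ =>
      garding_integral_le (hl i).le (hρ i) (hu_meas i) (hu_le i) (hDlow_le i) hδ_pos
end

section
/- Uniqueness of classical solutions of the Fokker–Planck system on a star graph: if ρ¹ = (ρ¹_i)_{i=1}^N and ρ² = (ρ²_i)_{i=1}^N are two classical solutions of the system with the same source terms f_i, the same drifts u_i and the same initial data ρ⁰_i, then ρ¹_i(x,t) = ρ²_i(x,t) for all i = 1, …, N and all (x,t) ∈ [0,l_i] × [0,T]. -/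
open MeasureTheory Set

/-- A classical solution of the Fokker–Planck system on a metric star graph with `N` edges:
each `ρ i : [0, l i] × [0, T] → ℝ` is continuous together with `∂_t ρ i`, `∂_x ρ i` and
`∂_x² ρ i`, satisfies the PDE `∂_t ρ_i = D_i ∂_x² ρ_i + ∂_x (u_i ρ_i) + f_i` on each edge,
the initial condition, the Kirchhoff condition and vertex continuity at the central
vertex, and the Dirichlet condition at the outer endpoints. -/
structure ClassicalSolution (N : ℕ) (T : ℝ) (l D : Fin N → ℝ)
    (u f : Fin N → ℝ → ℝ → ℝ) (ρ0 : Fin N → ℝ → ℝ)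
    (ρ : Fin N → ℝ → ℝ → ℝ) : Prop where
  cont : ∀ i, ContinuousOn (fun p : ℝ × ℝ => ρ i p.1 p.2) (Icc 0 (l i) ×ˢ Icc 0 T)
  diff_t : ∀ i, ∀ x ∈ Icc 0 (l i), ∀ t ∈ Icc 0 T, DifferentiableAt ℝ (ρ i x) t
  diff_x : ∀ i, ∀ x ∈ Icc 0 (l i), ∀ t ∈ Icc 0 T,
    DifferentiableAt ℝ (fun y => ρ i y t) x
  diff_xx : ∀ i, ∀ x ∈ Icc 0 (l i), ∀ t ∈ Icc 0 T,
    DifferentiableAt ℝ (fun y => deriv (fun z => ρ i z t) y) x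
  cont_t : ∀ i, ContinuousOn (fun p : ℝ × ℝ => deriv (ρ i p.1) p.2)
    (Icc 0 (l i) ×ˢ Icc 0 T)
  cont_x : ∀ i, ContinuousOn (fun p : ℝ × ℝ => deriv (fun y => ρ i y p.2) p.1)
    (Icc 0 (l i) ×ˢ Icc 0 T)
  cont_xx : ∀ i, ContinuousOn
    (fun p : ℝ × ℝ => deriv (fun y => deriv (fun z => ρ i z p.2) y) p.1)
    (Icc 0 (l i) ×ˢ Icc 0 T)
  pde : ∀ i, ∀ x ∈ Ioo 0 (l i), ∀ t ∈ Ioo 0 T,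
    deriv (ρ i x) t =
      D i * deriv (fun y => deriv (fun z => ρ i z t) y) x +
        deriv (fun y => u i y t * ρ i y t) x + f i x t
  init : ∀ i, ∀ x ∈ Icc 0 (l i), ρ i x 0 = ρ0 i x
  kirchhoff : ∀ t ∈ Ioo 0 T,
    ∑ i, (D i * deriv (fun y => ρ i y t) 0 + u i 0 t * ρ i 0 t) = 0
  vertex : ∀ i j, i ≠ j → ∀ t ∈ Ioo 0 T, ρ i 0 t = ρ j 0 t
  dirichlet : ∀ i, ∀ t ∈ Ioo 0 T, ρ i (l i) t = 0

/-!
Let `w = ρ₁ - ρ₂` and `E t = ∑ i, ∫ x in 0..l i, w i x t ^ 2`. Testing the equation for `w` against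
`w` and integrating by parts on every edge, the Dirichlet condition kills the terms at the outer
endpoints, while vertex continuity and the Kirchhoff condition turn the vertex terms into
`c ^ 2 * ∑ i, u i 0 t`, with `c` the common value of `w` at the vertex. A trace inequality bounds
`c ^ 2` by `E` plus a fraction of the dissipation `∑ i, D i * ∫ (∂ₓ w i) ^ 2`, and Young's
inequality does the same for the drift terms, so `E' ≤ K * E`. As `E 0 = 0`, Grönwall's inequality
gives `E = 0`.

Since the drifts need not be differentiable, `∂ₓ (u i * ρ i)` is a `deriv`, a junk value wherever
the product is not differentiable. The drift estimate survives this because it can only fail at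
simple zeros of `ρ₁ i · t` or `ρ₂ i · t`, and these form a countable set.
-/

open Filter Topology intervalIntegral Interval

lemma hasDerivAt_mul_of_eq_zero_right {u r : ℝ → ℝ} {x r' : ℝ}
    (hu : ContinuousAt u x) (hr : HasDerivAt r r' x) (h₀ : r x = 0) :
    HasDerivAt (fun y => u y * r y) (u x * r') x := by
  rw [hasDerivAt_iff_tendsto_slope] at hr ⊢
  refine ((hu.tendsto.mono_left nhdsWithin_le_nhds).mul hr).congr' ?_
  filter_upwards [self_mem_nhdsWithin] with y hy
  simp only [slope_def_field, h₀, mul_zero, sub_zero]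
  field_simp

lemma not_differentiableAt_mul_of_ne_zero {u r : ℝ → ℝ} {x : ℝ}
    (hu : ¬DifferentiableAt ℝ u x) (hr : DifferentiableAt ℝ r x) (h₀ : r x ≠ 0) :
    ¬DifferentiableAt ℝ (fun y => u y * r y) x := by
  refine fun h => hu ((h.div hr h₀).congr_of_eventuallyEq ?_)
  filter_upwards [hr.continuousAt.eventually_ne h₀] with y hy
  simp only [Pi.div_apply]
  field_simp

lemma deriv_mul_eq_zero_of_not_differentiableAt {u r : ℝ → ℝ} {x : ℝ}
    (hu : ¬DifferentiableAt ℝ u x) (hu_cont : ContinuousAt u x) (hr : DifferentiableAt ℝ r x)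
    (hr₀ : r x = 0 → deriv r x = 0) :
    deriv (fun y => u y * r y) x = 0 := by
  by_cases h₀ : r x = 0
  · simpa [hr₀ h₀] using (hasDerivAt_mul_of_eq_zero_right hu_cont hr.hasDerivAt h₀).deriv
  · exact deriv_zero_of_not_differentiableAt (not_differentiableAt_mul_of_ne_zero hu hr h₀)

/-- Where `u` is not differentiable, `deriv (fun y => u y * r y) x` is `u x * deriv r x` if
`r x = 0` and the junk value `0` otherwise; under `r x = 0 → deriv r x = 0` it is `0` either way. -/
lemma abs_deriv_mul_sub_deriv_mul_le {u r₁ r₂ : ℝ → ℝ} {x U M : ℝ}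
    (hu : ContinuousAt u x) (hr₁ : DifferentiableAt ℝ r₁ x) (hr₂ : DifferentiableAt ℝ r₂ x)
    (hU : |u x| ≤ U) (hM : |deriv u x| ≤ M)
    (hr₁₀ : r₁ x = 0 → deriv r₁ x = 0) (hr₂₀ : r₂ x = 0 → deriv r₂ x = 0) :
    |deriv (fun y => u y * r₁ y) x - deriv (fun y => u y * r₂ y) x| ≤
      M * |r₁ x - r₂ x| + U * |deriv r₁ x - deriv r₂ x| := by
  have hM₀ : 0 ≤ M := (abs_nonneg _).trans hM
  have hU₀ : 0 ≤ U := (abs_nonneg _).trans hU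
  by_cases hud : DifferentiableAt ℝ u x
  · rw [deriv_fun_mul hud hr₁, deriv_fun_mul hud hr₂]
    calc |deriv u x * r₁ x + u x * deriv r₁ x - (deriv u x * r₂ x + u x * deriv r₂ x)|
        = |deriv u x * (r₁ x - r₂ x) + u x * (deriv r₁ x - deriv r₂ x)| := by ring_nf
      _ ≤ |deriv u x| * |r₁ x - r₂ x| + |u x| * |deriv r₁ x - deriv r₂ x| := by
        rw [← abs_mul, ← abs_mul]; exact abs_add_le _ _
      _ ≤ _ := by gcongr
  · rw [deriv_mul_eq_zero_of_not_differentiableAt hud hu hr₁ hr₁₀,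
      deriv_mul_eq_zero_of_not_differentiableAt hud hu hr₂ hr₂₀, sub_zero, abs_zero]
    positivity

lemma countable_setOf_eq_zero_deriv_ne_zero (r : ℝ → ℝ) :
    {x | r x = 0 ∧ deriv r x ≠ 0}.Countable := by
  set S := {x | r x = 0 ∧ deriv r x ≠ 0}
  refine (countable_setOfPred_isolated_right_within (s := S)).mono fun x hx => mem_sep hx ?_
  have hne : ∀ᶠ y in 𝓝[≠] x, r y ≠ r x :=
    (differentiableAt_of_deriv_ne_zero hx.2).hasDerivAt.eventually_ne hx.2
  have hle : 𝓝[S ∩ Ioi x] x ≤ 𝓝[≠] x :=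
    nhdsWithin_mono _ fun y hy => ne_of_gt hy.2
  rw [← eventually_false_iff_eq_bot]
  filter_upwards [hle hne, self_mem_nhdsWithin] with y hy hyS
  exact hy (hyS.1.1.trans hx.1.symm)

section ParametricIntegral

variable {F F' : ℝ → ℝ → ℝ} {a b c d : ℝ}

lemma ContinuousOn.aestronglyMeasurable_uIoc {f : ℝ → ℝ} (hab : a ≤ b)
    (hf : ContinuousOn f (Icc a b)) : AEStronglyMeasurable f (volume.restrict (Ι a b)) := by
  rw [uIoc_of_le hab]
  exact (hf.mono Ioc_subset_Icc_self).aestronglyMeasurable measurableSet_Ioc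

lemma exists_abs_le_of_continuousOn_prod
    (hF : ContinuousOn (fun p : ℝ × ℝ => F p.1 p.2) (Icc a b ×ˢ Icc c d)) :
    ∃ C, ∀ x ∈ Icc a b, ∀ t ∈ Icc c d, |F x t| ≤ C := by
  obtain ⟨C, hC⟩ := (isCompact_Icc.prod isCompact_Icc).exists_bound_of_continuousOn hF
  exact ⟨C, fun x hx t ht => hC (x, t) ⟨hx, ht⟩⟩

lemma continuousOn_intervalIntegral_of_continuousOn_prod (hab : a ≤ b)
    (hF : ContinuousOn (fun p : ℝ × ℝ => F p.1 p.2) (Icc a b ×ˢ Icc c d)) :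
    ContinuousOn (fun t => ∫ x in a..b, F x t) (Icc c d) := by
  obtain ⟨C, hC⟩ := exists_abs_le_of_continuousOn_prod hF
  intro t₀ ht₀
  refine continuousWithinAt_of_dominated_interval (bound := fun _ => C) ?_ ?_
    intervalIntegrable_const (ae_of_all _ fun x hx => ?_)
  · filter_upwards [self_mem_nhdsWithin] with t ht
    exact (hF.uncurry_right t ht).aestronglyMeasurable_uIoc hab
  · filter_upwards [self_mem_nhdsWithin] with t ht
    refine ae_of_all _ fun x hx => hC x ?_ t ht
    rw [uIoc_of_le hab] at hx
    exact Ioc_subset_Icc_self hx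
  · rw [uIoc_of_le hab] at hx
    exact hF.uncurry_left x (Ioc_subset_Icc_self hx) t₀ ht₀

lemma hasDerivAt_intervalIntegral_of_continuousOn_prod {t : ℝ} (hab : a ≤ b)
    (hF : ContinuousOn (fun p : ℝ × ℝ => F p.1 p.2) (Icc a b ×ˢ Icc c d))
    (hF' : ContinuousOn (fun p : ℝ × ℝ => F' p.1 p.2) (Icc a b ×ˢ Icc c d))
    (hderiv : ∀ x ∈ Icc a b, ∀ s ∈ Ioo c d, HasDerivAt (F x) (F' x s) s) (ht : t ∈ Ioo c d) :
    HasDerivAt (fun s => ∫ x in a..b, F x s) (∫ x in a..b, F' x t) t := by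
  obtain ⟨C, hC⟩ := exists_abs_le_of_continuousOn_prod hF'
  have hIoc : ∀ x ∈ Ι a b, x ∈ Icc a b := fun x hx => by
    rw [uIoc_of_le hab] at hx
    exact Ioc_subset_Icc_self hx
  refine (hasDerivAt_integral_of_dominated_loc_of_deriv_le (F := fun s x => F x s)
    (F' := fun s x => F' x s) (bound := fun _ => C) (isOpen_Ioo.mem_nhds ht) ?_
    ((hF.uncurry_right t (Ioo_subset_Icc_self ht)).intervalIntegrable_of_Icc hab)
    ((hF'.uncurry_right t (Ioo_subset_Icc_self ht)).aestronglyMeasurable_uIoc hab)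
    (ae_of_all _ fun x hx s hs => hC x (hIoc x hx) s (Ioo_subset_Icc_self hs))
    intervalIntegrable_const
    (ae_of_all _ fun x hx s hs => hderiv x (hIoc x hx) s hs)).2
  filter_upwards [isOpen_Ioo.mem_nhds ht] with s hs
  exact (hF.uncurry_right s (Ioo_subset_Icc_self hs)).aestronglyMeasurable_uIoc hab

end ParametricIntegral

lemma le_zero_of_hasDerivAt_le_mul_self {E E' : ℝ → ℝ} {K a b : ℝ}
    (hE : ContinuousOn E (Icc a b)) (hE' : ∀ t ∈ Ioo a b, HasDerivAt E (E' t) t)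
    (hle : ∀ t ∈ Ioo a b, E' t ≤ K * E t) (ha : E a ≤ 0) :
    ∀ t ∈ Icc a b, E t ≤ 0 := by
  have hexp (t : ℝ) : HasDerivAt (fun s => Real.exp (-K * s)) (Real.exp (-K * t) * -K) t := by
    simpa using ((hasDerivAt_id t).const_mul (-K)).exp
  have hanti : AntitoneOn (fun t => Real.exp (-K * t) * E t) (Icc a b) := by
    refine antitoneOn_of_deriv_nonpos (convex_Icc a b) (by fun_prop) ?_ ?_ <;>
      intro t ht <;> rw [interior_Icc] at ht
    · exact ((hexp t).fun_mul (hE' t ht)).differentiableAt.differentiableWithinAt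
    · rw [((hexp t).fun_mul (hE' t ht)).deriv]
      have := mul_le_mul_of_nonneg_left (hle t ht) (Real.exp_pos (-K * t)).le
      linarith
  intro t ht
  have := hanti (left_mem_Icc.2 (ht.1.trans ht.2)) ht ht.1
  have := mul_nonpos_of_nonneg_of_nonpos (Real.exp_pos (-K * a)).le ha
  exact nonpos_of_mul_nonpos_right (by linarith) (Real.exp_pos (-K * t))

lemma mul_mul_le_sq_div_add_div_four_mul_sq {U D s r : ℝ} (hD : 0 < D) :
    U * (s * r) ≤ U ^ 2 / D * s ^ 2 + D / 4 * r ^ 2 := by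
  have e : (U ^ 2 / D * s ^ 2 + D / 4 * r ^ 2) * (4 * D) = 4 * U ^ 2 * s ^ 2 + D ^ 2 * r ^ 2 := by
    field_simp
  refine le_of_mul_le_mul_right ?_ (by positivity : 0 < 4 * D)
  rw [e]
  nlinarith [sq_nonneg (2 * U * s - D * r)]

lemma mul_le_of_abs_le_mul_abs_add_mul_abs {w g q M U D : ℝ} (hD : 0 < D)
    (hg : |g| ≤ M * |w| + U * |q|) :
    w * g ≤ (M + U ^ 2 / D) * w ^ 2 + D / 4 * q ^ 2 := by
  have young := mul_mul_le_sq_div_add_div_four_mul_sq (U := U) (s := |w|) (r := |q|) hD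
  rw [sq_abs, sq_abs] at young
  calc w * g ≤ |w| * |g| := by rw [← abs_mul]; exact le_abs_self _
    _ ≤ |w| * (M * |w| + U * |q|) := by gcongr
    _ = M * w ^ 2 + U * (|w| * |q|) := by rw [← sq_abs w]; ring
    _ ≤ _ := by linarith

section Interval

variable {w q : ℝ → ℝ} {a b : ℝ}

lemma sq_le_mul_integral_sq_add_inv_mul_integral_sq {ε : ℝ} (hab : a ≤ b) (hε : 0 < ε)
    (hw : ∀ x ∈ Icc a b, HasDerivAt w (q x) x) (hq : ContinuousOn q (Icc a b)) (hwb : w b = 0) :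
    w a ^ 2 ≤ ε * (∫ x in a..b, w x ^ 2) + ε⁻¹ * ∫ x in a..b, q x ^ 2 := by
  have hw_cont : ContinuousOn w (Icc a b) := fun x hx => (hw x hx).continuousAt.continuousWithinAt
  have hi {f : ℝ → ℝ} (hf : ContinuousOn f (Icc a b)) : IntervalIntegrable f volume a b :=
    hf.intervalIntegrable_of_Icc hab
  have hftc : ∫ x in a..b, 2 * w x * q x = w b ^ 2 - w a ^ 2 := by
    refine integral_eq_sub_of_hasDerivAt (f := fun x => w x ^ 2) (fun x hx => ?_) (hi (by fun_prop))
    simpa using (hw x (by rwa [uIcc_of_le hab] at hx)).fun_pow 2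
  have hpt : ∀ x ∈ Icc a b, -(2 * w x * q x) ≤ ε * w x ^ 2 + ε⁻¹ * q x ^ 2 := fun x _ => by
    have h : 0 ≤ ε⁻¹ * (ε * w x + q x) ^ 2 := by positivity
    have e : ε⁻¹ * (ε * w x + q x) ^ 2 = ε * w x ^ 2 + ε⁻¹ * q x ^ 2 + 2 * w x * q x := by
      field_simp
      ring
    linarith
  calc w a ^ 2 = ∫ x in a..b, -(2 * w x * q x) := by
        rw [intervalIntegral.integral_neg, hftc, hwb]; ring
    _ ≤ ∫ x in a..b, (ε * w x ^ 2 + ε⁻¹ * q x ^ 2) :=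
      integral_mono_on hab (hi (by fun_prop)) (hi (by fun_prop)) hpt
    _ = _ := by
      rw [integral_add (hi (by fun_prop)) (hi (by fun_prop)), intervalIntegral.integral_const_mul,
        intervalIntegral.integral_const_mul]

lemma integral_mul_le_of_ae_abs_sub_le {q₂ v : ℝ → ℝ} {M U D : ℝ} (hab : a ≤ b) (hD : 0 < D)
    (hw : ∀ x ∈ Icc a b, HasDerivAt w (q x) x) (hq : ∀ x ∈ Icc a b, HasDerivAt q (q₂ x) x)
    (hq₂ : ContinuousOn q₂ (Icc a b)) (hv : ContinuousOn v (Icc a b)) (hwb : w b = 0)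
    (hv_le : ∀ᵐ x ∂volume.restrict (Icc a b), |v x - D * q₂ x| ≤ M * |w x| + U * |q x|) :
    ∫ x in a..b, w x * v x ≤ -(D * (w a * q a)) - 3 / 4 * D * (∫ x in a..b, q x ^ 2) +
      (M + U ^ 2 / D) * ∫ x in a..b, w x ^ 2 := by
  have hw_cont : ContinuousOn w (Icc a b) := fun x hx => (hw x hx).continuousAt.continuousWithinAt
  have hq_cont : ContinuousOn q (Icc a b) := fun x hx => (hq x hx).continuousAt.continuousWithinAt
  have hi {f : ℝ → ℝ} (hf : ContinuousOn f (Icc a b)) : IntervalIntegrable f volume a b :=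
    hf.intervalIntegrable_of_Icc hab
  have huIcc : ∀ x ∈ [[a, b]], x ∈ Icc a b := fun x hx => by rwa [uIcc_of_le hab] at hx
  have hibp : ∫ x in a..b, w x * q₂ x = -(w a * q a) - ∫ x in a..b, q x ^ 2 := by
    rw [integral_mul_deriv_eq_deriv_mul (fun x hx => hw x (huIcc x hx))
      (fun x hx => hq x (huIcc x hx)) (hi hq_cont) (hi hq₂), hwb]
    simp only [sq, zero_mul, zero_sub]
  have hdrift : ∫ x in a..b, w x * (v x - D * q₂ x) ≤
      (M + U ^ 2 / D) * (∫ x in a..b, w x ^ 2) + D / 4 * ∫ x in a..b, q x ^ 2 := by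
    rw [← intervalIntegral.integral_const_mul, ← intervalIntegral.integral_const_mul,
      ← integral_add (hi (by fun_prop)) (hi (by fun_prop))]
    exact integral_mono_ae_restrict hab (hi (by fun_prop)) (hi (by fun_prop))
      (hv_le.mono fun x hx => mul_le_of_abs_le_mul_abs_add_mul_abs hD hx)
  calc ∫ x in a..b, w x * v x
      = D * (∫ x in a..b, w x * q₂ x) + ∫ x in a..b, w x * (v x - D * q₂ x) := by
        rw [← intervalIntegral.integral_const_mul, ← integral_add (hi (by fun_prop))
          (hi (by fun_prop))]
        congr 1 with x
        ring
    _ ≤ _ := by rw [hibp]; linarith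

end Interval

noncomputable def energy {N : ℕ} (l : Fin N → ℝ) (ρ₁ ρ₂ : Fin N → ℝ → ℝ → ℝ) (t : ℝ) : ℝ :=
  ∑ i, ∫ x in 0..l i, (ρ₁ i x t - ρ₂ i x t) ^ 2

lemma integral_sq_le_energy {N : ℕ} {l : Fin N → ℝ} {ρ₁ ρ₂ : Fin N → ℝ → ℝ → ℝ}
    (hl : ∀ i, 0 < l i) (i : Fin N) (t : ℝ) :
    ∫ x in 0..l i, (ρ₁ i x t - ρ₂ i x t) ^ 2 ≤ energy l ρ₁ ρ₂ t :=
  Finset.single_le_sum (f := fun i => ∫ x in 0..l i, (ρ₁ i x t - ρ₂ i x t) ^ 2)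
    (fun i _ => intervalIntegral.integral_nonneg (hl i).le fun _ _ => sq_nonneg _)
    (Finset.mem_univ i)

namespace ClassicalSolution

variable {N : ℕ} {T : ℝ} {l D : Fin N → ℝ} {u f : Fin N → ℝ → ℝ → ℝ} {ρ0 : Fin N → ℝ → ℝ}
  {ρ₁ ρ₂ : Fin N → ℝ → ℝ → ℝ}

lemma sub_apply_length_eq_zero (h₁ : ClassicalSolution N T l D u f ρ0 ρ₁)
    (h₂ : ClassicalSolution N T l D u f ρ0 ρ₂) {i : Fin N} {t : ℝ} (ht : t ∈ Ioo 0 T) :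
    ρ₁ i (l i) t - ρ₂ i (l i) t = 0 := by
  rw [h₁.dirichlet i t ht, h₂.dirichlet i t ht, sub_zero]

lemma sub_apply_zero_eq (h₁ : ClassicalSolution N T l D u f ρ0 ρ₁)
    (h₂ : ClassicalSolution N T l D u f ρ0 ρ₂) (i j : Fin N) {t : ℝ} (ht : t ∈ Ioo 0 T) :
    ρ₁ i 0 t - ρ₂ i 0 t = ρ₁ j 0 t - ρ₂ j 0 t := by
  rcases eq_or_ne i j with rfl | hij
  · rfl
  · rw [h₁.vertex i j hij t ht, h₂.vertex i j hij t ht]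

lemma sum_mul_deriv_sub_eq (h₁ : ClassicalSolution N T l D u f ρ0 ρ₁)
    (h₂ : ClassicalSolution N T l D u f ρ0 ρ₂) (j : Fin N) {t : ℝ} (ht : t ∈ Ioo 0 T) :
    ∑ i, D i * (deriv (fun y => ρ₁ i y t) 0 - deriv (fun y => ρ₂ i y t) 0) =
      -((∑ i, u i 0 t) * (ρ₁ j 0 t - ρ₂ j 0 t)) := by
  have h := congrArg₂ (· - ·) (h₁.kirchhoff t ht) (h₂.kirchhoff t ht)
  simp only [sub_zero, ← Finset.sum_sub_distrib] at h
  rw [eq_neg_iff_add_eq_zero, Finset.sum_mul, ← Finset.sum_add_distrib]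
  refine (Finset.sum_congr rfl fun i _ => ?_).trans h
  rw [← sub_apply_zero_eq h₁ h₂ i j ht]
  ring

lemma ae_abs_drift_sub_le (h₁ : ClassicalSolution N T l D u f ρ0 ρ₁)
    (h₂ : ClassicalSolution N T l D u f ρ0 ρ₂) {i : Fin N} {t U M : ℝ} (ht : t ∈ Ioo 0 T)
    (hu : ContinuousOn (fun p : ℝ × ℝ => u i p.1 p.2) (Icc 0 (l i) ×ˢ Icc 0 T))
    (hU : ∀ x ∈ Icc 0 (l i), |u i x t| ≤ U)
    (hM : ∀ x ∈ Icc 0 (l i), |deriv (fun y => u i y t) x| ≤ M) :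
    ∀ᵐ x ∂volume.restrict (Icc 0 (l i)),
      |(deriv (ρ₁ i x) t - deriv (ρ₂ i x) t) -
          D i * (deriv (fun y => deriv (fun z => ρ₁ i z t) y) x -
            deriv (fun y => deriv (fun z => ρ₂ i z t) y) x)| ≤
        M * |ρ₁ i x t - ρ₂ i x t| +
          U * |deriv (fun z => ρ₁ i z t) x - deriv (fun z => ρ₂ i z t) x| := by
  have hZ := ((countable_setOf_eq_zero_deriv_ne_zero (fun z => ρ₁ i z t)).union
    (countable_setOf_eq_zero_deriv_ne_zero (fun z => ρ₂ i z t))).union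
      ((countable_singleton (l i)).insert 0)
  filter_upwards [ae_restrict_mem measurableSet_Icc, hZ.ae_notMem _] with x hx hxZ
  simp only [mem_union, mem_ofPred_eq, mem_insert_iff, mem_singleton_iff, not_or, not_and,
    not_not] at hxZ
  obtain ⟨⟨hr₁, hr₂⟩, hx0, hxl⟩ := hxZ
  have hxI : x ∈ Ioo 0 (l i) := ⟨hx.1.lt_of_ne' hx0, hx.2.lt_of_ne hxl⟩
  have htI : t ∈ Icc 0 T := Ioo_subset_Icc_self ht
  have hu_at : ContinuousAt (fun y => u i y t) x :=
    (hu.uncurry_right t htI).continuousAt (Icc_mem_nhds hxI.1 hxI.2)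
  have hpde : (deriv (ρ₁ i x) t - deriv (ρ₂ i x) t) -
      D i * (deriv (fun y => deriv (fun z => ρ₁ i z t) y) x -
        deriv (fun y => deriv (fun z => ρ₂ i z t) y) x) =
      deriv (fun y => u i y t * ρ₁ i y t) x - deriv (fun y => u i y t * ρ₂ i y t) x := by
    rw [h₁.pde i x hxI t ht, h₂.pde i x hxI t ht]
    ring
  rw [hpde]
  exact abs_deriv_mul_sub_deriv_mul_le hu_at (h₁.diff_x i x hx t htI) (h₂.diff_x i x hx t htI)
    (hU x hx) (hM x hx) hr₁ hr₂

lemma integral_sub_mul_deriv_sub_le (h₁ : ClassicalSolution N T l D u f ρ0 ρ₁)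
    (h₂ : ClassicalSolution N T l D u f ρ0 ρ₂) {i : Fin N} {t U M : ℝ} (hl : 0 < l i)
    (hD : 0 < D i) (ht : t ∈ Ioo 0 T)
    (hu : ContinuousOn (fun p : ℝ × ℝ => u i p.1 p.2) (Icc 0 (l i) ×ˢ Icc 0 T))
    (hU : ∀ x ∈ Icc 0 (l i), |u i x t| ≤ U)
    (hM : ∀ x ∈ Icc 0 (l i), |deriv (fun y => u i y t) x| ≤ M) :
    ∫ x in 0..l i, (ρ₁ i x t - ρ₂ i x t) * (deriv (ρ₁ i x) t - deriv (ρ₂ i x) t) ≤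
      -(D i * ((ρ₁ i 0 t - ρ₂ i 0 t) *
        (deriv (fun z => ρ₁ i z t) 0 - deriv (fun z => ρ₂ i z t) 0))) -
      3 / 4 * D i *
        (∫ x in 0..l i, (deriv (fun z => ρ₁ i z t) x - deriv (fun z => ρ₂ i z t) x) ^ 2) +
      (M + U ^ 2 / D i) * ∫ x in 0..l i, (ρ₁ i x t - ρ₂ i x t) ^ 2 := by
  have htI : t ∈ Icc 0 T := Ioo_subset_Icc_self ht
  refine integral_mul_le_of_ae_abs_sub_le hl.le hD
    (fun x hx => (h₁.diff_x i x hx t htI).hasDerivAt.sub (h₂.diff_x i x hx t htI).hasDerivAt)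
    (fun x hx => (h₁.diff_xx i x hx t htI).hasDerivAt.sub (h₂.diff_xx i x hx t htI).hasDerivAt)
    (((h₁.cont_xx i).sub (h₂.cont_xx i)).uncurry_right (f := fun x s =>
      deriv (fun y => deriv (fun z => ρ₁ i z s) y) x -
        deriv (fun y => deriv (fun z => ρ₂ i z s) y) x) t htI)
    (((h₁.cont_t i).sub (h₂.cont_t i)).uncurry_right
      (f := fun x s => deriv (ρ₁ i x) s - deriv (ρ₂ i x) s) t htI) ?_
    (ae_abs_drift_sub_le h₁ h₂ ht hu hU hM)
  exact sub_apply_length_eq_zero h₁ h₂ ht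

lemma energy_zero (h₁ : ClassicalSolution N T l D u f ρ0 ρ₁)
    (h₂ : ClassicalSolution N T l D u f ρ0 ρ₂) (hl : ∀ i, 0 < l i) :
    energy l ρ₁ ρ₂ 0 = 0 := by
  refine Finset.sum_eq_zero fun i _ => ?_
  rw [intervalIntegral.integral_congr (g := fun _ => 0) fun x hx => ?_,
    intervalIntegral.integral_zero]
  rw [uIcc_of_le (hl i).le] at hx
  simp [h₁.init i x hx, h₂.init i x hx]

lemma continuousOn_energy (h₁ : ClassicalSolution N T l D u f ρ0 ρ₁)
    (h₂ : ClassicalSolution N T l D u f ρ0 ρ₂) (hl : ∀ i, 0 < l i) :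
    ContinuousOn (energy l ρ₁ ρ₂) (Icc 0 T) :=
  continuousOn_finsetSum _ fun i _ =>
    continuousOn_intervalIntegral_of_continuousOn_prod (hl i).le
      (((h₁.cont i).sub (h₂.cont i)).pow 2)

lemma hasDerivAt_energy (h₁ : ClassicalSolution N T l D u f ρ0 ρ₁)
    (h₂ : ClassicalSolution N T l D u f ρ0 ρ₂) (hl : ∀ i, 0 < l i) {t : ℝ} (ht : t ∈ Ioo 0 T) :
    HasDerivAt (energy l ρ₁ ρ₂)
      (∑ i, 2 * ∫ x in 0..l i, (ρ₁ i x t - ρ₂ i x t) * (deriv (ρ₁ i x) t - deriv (ρ₂ i x) t))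
      t := by
  refine HasDerivAt.fun_sum fun i _ => ?_
  rw [← intervalIntegral.integral_const_mul]
  refine hasDerivAt_intervalIntegral_of_continuousOn_prod
    (F' := fun x s => 2 * ((ρ₁ i x s - ρ₂ i x s) * (deriv (ρ₁ i x) s - deriv (ρ₂ i x) s))) (hl i).le
    (((h₁.cont i).sub (h₂.cont i)).pow 2)
    (continuousOn_const.mul (((h₁.cont i).sub (h₂.cont i)).mul
      ((h₁.cont_t i).sub (h₂.cont_t i))))
    (fun x hx s hs => ?_) ht
  have hs := Ioo_subset_Icc_self hs
  refine (((h₁.diff_t i x hx s hs).hasDerivAt.fun_sub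
    (h₂.diff_t i x hx s hs).hasDerivAt).fun_pow 2).congr_deriv ?_
  norm_num
  ring

lemma sq_sub_apply_zero_le (h₁ : ClassicalSolution N T l D u f ρ0 ρ₁)
    (h₂ : ClassicalSolution N T l D u f ρ0 ρ₂) {j : Fin N} {t ε : ℝ} (hl : 0 < l j)
    (hε : 0 < ε) (ht : t ∈ Ioo 0 T) :
    (ρ₁ j 0 t - ρ₂ j 0 t) ^ 2 ≤ ε * (∫ x in 0..l j, (ρ₁ j x t - ρ₂ j x t) ^ 2) +
      ε⁻¹ * ∫ x in 0..l j, (deriv (fun z => ρ₁ j z t) x - deriv (fun z => ρ₂ j z t) x) ^ 2 := by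
  have htI : t ∈ Icc 0 T := Ioo_subset_Icc_self ht
  exact sq_le_mul_integral_sq_add_inv_mul_integral_sq hl.le hε
    (fun x hx => (h₁.diff_x j x hx t htI).hasDerivAt.sub (h₂.diff_x j x hx t htI).hasDerivAt)
    (((h₁.cont_x j).sub (h₂.cont_x j)).uncurry_right (f := fun x s =>
      deriv (fun y => ρ₁ j y s) x - deriv (fun y => ρ₂ j y s) x) t htI)
    (sub_apply_length_eq_zero h₁ h₂ ht)

lemma energy_deriv_le_of_abs_le (h₁ : ClassicalSolution N T l D u f ρ0 ρ₁)
    (h₂ : ClassicalSolution N T l D u f ρ0 ρ₂) (hl : ∀ i, 0 < l i) (hD : ∀ i, 0 < D i)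
    (hu : ∀ i, ContinuousOn (fun p : ℝ × ℝ => u i p.1 p.2) (Icc 0 (l i) ×ˢ Icc 0 T))
    {U M : Fin N → ℝ} {S t : ℝ} (j : Fin N) (ht : t ∈ Ioo 0 T)
    (hU : ∀ i, ∀ x ∈ Icc 0 (l i), |u i x t| ≤ U i)
    (hM : ∀ i, ∀ x ∈ Icc 0 (l i), |deriv (fun y => u i y t) x| ≤ M i)
    (hS : 0 < S) (huS : ∑ i, u i 0 t ≤ S) :
    ∑ i, 2 * ∫ x in 0..l i, (ρ₁ i x t - ρ₂ i x t) * (deriv (ρ₁ i x) t - deriv (ρ₂ i x) t) ≤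
      (∑ i, 2 * (M i + U i ^ 2 / D i) + 4 * (S ^ 2 / D j)) * energy l ρ₁ ρ₂ t := by
  set k := fun i => M i + U i ^ 2 / D i
  set E := energy l ρ₁ ρ₂ t
  set c := ρ₁ j 0 t - ρ₂ j 0 t
  set p := fun i => deriv (fun y => ρ₁ i y t) 0 - deriv (fun y => ρ₂ i y t) 0
  set A := fun i => ∫ x in 0..l i, (ρ₁ i x t - ρ₂ i x t) ^ 2
  set Q := fun i =>
    ∫ x in 0..l i, (deriv (fun z => ρ₁ i z t) x - deriv (fun z => ρ₂ i z t) x) ^ 2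
  have hQ : ∀ i, 0 ≤ D i * Q i := fun i =>
    mul_nonneg (hD i).le (intervalIntegral.integral_nonneg (hl i).le fun _ _ => sq_nonneg _)
  have hk : ∀ i, 0 ≤ k i := fun i =>
    add_nonneg ((abs_nonneg _).trans (hM i 0 ⟨le_rfl, (hl i).le⟩)) (by have := hD i; positivity)
  have hedge : ∀ i, 2 * ∫ x in 0..l i,
      (ρ₁ i x t - ρ₂ i x t) * (deriv (ρ₁ i x) t - deriv (ρ₂ i x) t) ≤
        -(2 * c) * (D i * p i) - 3 / 2 * (D i * Q i) + 2 * k i * A i := fun i => by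
    have h := integral_sub_mul_deriv_sub_le h₁ h₂ (hl i) (hD i) ht (hu i) (hU i) (hM i)
    rw [sub_apply_zero_eq h₁ h₂ i j ht] at h
    linarith
  have hkir : ∑ i, D i * p i = -((∑ i, u i 0 t) * c) := sum_mul_deriv_sub_eq h₁ h₂ j ht
  have hsum : ∑ i, 2 * ∫ x in 0..l i,
      (ρ₁ i x t - ρ₂ i x t) * (deriv (ρ₁ i x) t - deriv (ρ₂ i x) t) ≤
        2 * ((∑ i, u i 0 t) * c ^ 2) - 3 / 2 * (∑ i, D i * Q i) + ∑ i, 2 * k i * A i := by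
    refine (Finset.sum_le_sum fun i _ => hedge i).trans_eq ?_
    rw [Finset.sum_add_distrib, Finset.sum_sub_distrib, ← Finset.mul_sum, ← Finset.mul_sum, hkir]
    ring
  have hvertex : (∑ i, u i 0 t) * c ^ 2 ≤ 2 * (S ^ 2 / D j) * A j + D j / 2 * Q j := by
    -- with this `ε`, the trace inequality uses up exactly `D j / 2 * Q j` of the dissipation
    have hε : 0 < 2 * S / D j := by have := hD j; positivity
    have e : S * (2 * S / D j * A j + (2 * S / D j)⁻¹ * Q j) =
        2 * (S ^ 2 / D j) * A j + D j / 2 * Q j := by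
      have := (hD j).ne'
      field_simp
    calc (∑ i, u i 0 t) * c ^ 2 ≤ S * c ^ 2 := mul_le_mul_of_nonneg_right huS (sq_nonneg c)
      _ ≤ _ := (mul_le_mul_of_nonneg_left (sq_sub_apply_zero_le h₁ h₂ (hl j) hε ht) hS.le)
      _ = _ := e
  have hQj : D j * Q j ≤ ∑ i, D i * Q i :=
    Finset.single_le_sum (fun i _ => hQ i) (Finset.mem_univ j)
  have hA : ∑ i, 2 * k i * A i ≤ (∑ i, 2 * k i) * E := by
    rw [Finset.sum_mul]
    exact Finset.sum_le_sum fun i _ =>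
      mul_le_mul_of_nonneg_left (integral_sq_le_energy hl i t) (by linarith [hk i])
  have hAj : 4 * (S ^ 2 / D j) * A j ≤ 4 * (S ^ 2 / D j) * E :=
    mul_le_mul_of_nonneg_left (integral_sq_le_energy hl j t) (by have := hD j; positivity)
  rw [add_mul]
  linarith [hQ j]

lemma exists_energy_deriv_le (h₁ : ClassicalSolution N T l D u f ρ0 ρ₁)
    (h₂ : ClassicalSolution N T l D u f ρ0 ρ₂) (hl : ∀ i, 0 < l i) (hD : ∀ i, 0 < D i)
    (hu : ∀ i, ContinuousOn (fun p : ℝ × ℝ => u i p.1 p.2) (Icc 0 (l i) ×ˢ Icc 0 T))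
    (hux : ∀ i, ContinuousOn (fun p : ℝ × ℝ => deriv (fun y => u i y p.2) p.1)
      (Icc 0 (l i) ×ˢ Icc 0 T)) (j : Fin N) :
    ∃ K, ∀ t ∈ Ioo 0 T,
      ∑ i, 2 * ∫ x in 0..l i, (ρ₁ i x t - ρ₂ i x t) * (deriv (ρ₁ i x) t - deriv (ρ₂ i x) t) ≤
        K * energy l ρ₁ ρ₂ t := by
  choose U hU using fun i => exists_abs_le_of_continuousOn_prod (hu i)
  choose M hM using fun i => exists_abs_le_of_continuousOn_prod
    (F := fun x t => deriv (fun y => u i y t) x) (hux i)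
  refine ⟨_, fun t ht => energy_deriv_le_of_abs_le h₁ h₂ hl hD hu (S := ∑ i, |U i| + 1) j ht
    (fun i x hx => hU i x hx t (Ioo_subset_Icc_self ht))
    (fun i x hx => hM i x hx t (Ioo_subset_Icc_self ht)) (by positivity) ?_⟩
  refine (Finset.sum_le_sum fun i _ => ?_).trans (le_add_of_nonneg_right zero_le_one)
  exact (le_abs_self _).trans
    ((hU i 0 ⟨le_rfl, (hl i).le⟩ t (Ioo_subset_Icc_self ht)).trans (le_abs_self _))

end ClassicalSolution

theorem uniqueness_classical_solutions_general
    (N : ℕ) (T : ℝ)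
    (l D : Fin N → ℝ) (hl : ∀ i, 0 < l i) (hD : ∀ i, 0 < D i)
    (u f : Fin N → ℝ → ℝ → ℝ)
    (hu_cont : ∀ i, ContinuousOn (fun p : ℝ × ℝ => u i p.1 p.2)
      (Icc 0 (l i) ×ˢ Icc 0 T))
    (hux_cont : ∀ i, ContinuousOn (fun p : ℝ × ℝ => deriv (fun y => u i y p.2) p.1)
      (Icc 0 (l i) ×ˢ Icc 0 T))
    (ρ0 : Fin N → ℝ → ℝ) (ρ1 ρ2 : Fin N → ℝ → ℝ → ℝ)
    (h1 : ClassicalSolution N T l D u f ρ0 ρ1)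
    (h2 : ClassicalSolution N T l D u f ρ0 ρ2) :
    ∀ i, ∀ x ∈ Icc 0 (l i), ∀ t ∈ Icc 0 T, ρ1 i x t = ρ2 i x t := by
  intro i x hx t ht
  obtain ⟨K, hK⟩ := h1.exists_energy_deriv_le h2 hl hD hu_cont hux_cont i
  have hE : energy l ρ1 ρ2 t ≤ 0 :=
    le_zero_of_hasDerivAt_le_mul_self (h1.continuousOn_energy h2 hl)
      (fun s hs => h1.hasDerivAt_energy h2 hl hs) hK (h1.energy_zero h2 hl).le t ht
  by_contra hne
  have hpos : 0 < ∫ y in 0..l i, (ρ1 i y t - ρ2 i y t) ^ 2 :=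
    integral_pos (hl i) ((((h1.cont i).sub (h2.cont i)).pow 2).uncurry_right
      (f := fun y s => (ρ1 i y s - ρ2 i y s) ^ 2) t ht) (fun _ _ => sq_nonneg _)
      ⟨x, hx, sq_pos_of_ne_zero (sub_ne_zero.2 hne)⟩
  linarith [integral_sq_le_energy (ρ₁ := ρ1) (ρ₂ := ρ2) hl i t]

/-- **Uniqueness of classical solutions of the Fokker–Planck system on a star graph.**
Two classical solutions with the same sources `f`, drifts `u` and initial data `ρ0`
coincide on `[0, l i] × [0, T]` for every edge `i`. -/
theorem uniqueness_classical_solutions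
    (N : ℕ) (hN : 0 < N) (T : ℝ) (hT : 0 < T)
    (l D : Fin N → ℝ) (hl : ∀ i, 0 < l i) (hD : ∀ i, 0 < D i)
    (u f : Fin N → ℝ → ℝ → ℝ)
    (hu_cont : ∀ i, ContinuousOn (fun p : ℝ × ℝ => u i p.1 p.2)
      (Icc 0 (l i) ×ˢ Icc 0 T))
    (hu_bdd : ∀ i, ∃ C, ∀ x ∈ Icc 0 (l i), ∀ t ∈ Icc 0 T, |u i x t| ≤ C)
    (hux_cont : ∀ i, ContinuousOn (fun p : ℝ × ℝ => deriv (fun y => u i y p.2) p.1)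
      (Icc 0 (l i) ×ˢ Icc 0 T))
    (hf_cont : ∀ i, ContinuousOn (fun p : ℝ × ℝ => f i p.1 p.2)
      (Icc 0 (l i) ×ˢ Icc 0 T))
    (ρ0 : Fin N → ℝ → ℝ) (ρ1 ρ2 : Fin N → ℝ → ℝ → ℝ)
    (h1 : ClassicalSolution N T l D u f ρ0 ρ1)
    (h2 : ClassicalSolution N T l D u f ρ0 ρ2) :
    ∀ i, ∀ x ∈ Icc 0 (l i), ∀ t ∈ Icc 0 T, ρ1 i x t = ρ2 i x t :=
  uniqueness_classical_solutions_general N T l D hl hD u f hu_cont hux_cont ρ0 ρ1 ρ2 h1 h2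
end

section
/- Positivity preservation for the Fokker–Planck system on a star graph: if ρ = (ρ_i)_{i=1}^N is a classical solution of the Fokker–Planck system with f_i ≡ 0 and if the initial data satisfy ρ⁰_i(x) ≥ 0 for all x ∈ [0,l_i] and all i = 1, …, N, then ρ_i(x,t) ≥ 0 for all (x,t) ∈ [0,l_i] × [0,T] and all i = 1, …, N. -/
/-!
For `s < T` consider `w_i(x, t) = e^{-λt} (1 + K x) ρ_i(x, t)` on the compact set
`⋃ᵢ [0, l_i] × [0, s]`, and suppose its minimum is negative. It is not attained at `t = 0`
(nonnegative data) nor at an outer endpoint (Dirichlet condition). At the vertex, minimality of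
`(1 + K x) ρ_j(x, t₀)` along every edge gives `∂ₓρ_j(0, t₀) ≥ -K ρ(0, t₀) > 0`, and for
`K ∑ D_j > N sup |u|` this makes the Kirchhoff flux strictly positive. At an interior point
`∂ₓ((1 + K x) ρ) = 0`, `∂ₓ²((1 + K x) ρ) ≥ 0` and `∂ₜρ ≤ λρ`; once `λ` dominates the
diffusion and drift coefficients, these contradict the equation. Hence `ρ ≥ 0` on `[0, s]` for
every `s < T`, and at `t = T` by continuity.
-/

open MeasureTheory Set

open Filter Topology Real

theorem exists_abs_le_of_continuousOn {ι α : Type*} [Finite ι] [TopologicalSpace α]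
    {s : ι → Set α} (hs : ∀ i, IsCompact (s i)) {f : ι → α → ℝ}
    (hf : ∀ i, ContinuousOn (f i) (s i)) : ∃ C, 0 ≤ C ∧ ∀ i, ∀ p ∈ s i, |f i p| ≤ C := by
  choose C hC using fun i => (hs i).exists_bound_of_continuousOn (hf i)
  obtain ⟨M, hM⟩ := Finite.bddAbove_range C
  exact ⟨max M 0, le_max_right _ _, fun i p hp =>
    (hC i p hp).trans ((hM ⟨i, rfl⟩).trans (le_max_left _ _))⟩

theorem exists_forall_le_of_isCompact {ι α : Type*} [Finite ι] [Nonempty ι]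
    [TopologicalSpace α] {s : ι → Set α} (hs : ∀ i, IsCompact (s i))
    (hne : ∀ i, (s i).Nonempty) {f : ι → α → ℝ} (hf : ∀ i, ContinuousOn (f i) (s i)) :
    ∃ i, ∃ p ∈ s i, ∀ j, ∀ q ∈ s j, f i p ≤ f j q := by
  choose p hp hmin using fun i => (hs i).exists_isMinOn (hne i) (hf i)
  obtain ⟨i, hi⟩ := Finite.exists_min fun i => f i (p i)
  exact ⟨i, p i, hp i, fun j q hq => (hi j).trans (hmin j hq)⟩

theorem IsMinOn.hasDerivAt_nonneg_of_Icc_left {f : ℝ → ℝ} {f' a b : ℝ}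
    (h : IsMinOn f (Icc a b) a) (hab : a < b) (hf : HasDerivAt f f' a) : 0 ≤ f' := by
  have hcone : b - a ∈ posTangentConeAt (Icc a b) a :=
    sub_mem_posTangentConeAt_of_segment_subset (segment_eq_Icc hab.le ▸ Subset.rfl)
  have := h.localize.hasFDerivWithinAt_nonneg hf.hasFDerivAt.hasFDerivWithinAt hcone
  rw [ContinuousLinearMap.toSpanSingleton_apply, smul_eq_mul] at this
  exact nonneg_of_mul_nonneg_right this (sub_pos.2 hab)

theorem IsMinOn.hasDerivAt_nonpos_of_Icc_right {f : ℝ → ℝ} {f' a b : ℝ}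
    (h : IsMinOn f (Icc a b) b) (hab : a < b) (hf : HasDerivAt f f' b) : f' ≤ 0 := by
  have hcone : a - b ∈ posTangentConeAt (Icc a b) b :=
    sub_mem_posTangentConeAt_of_segment_subset (by rw [segment_symm, segment_eq_Icc hab.le])
  have := h.localize.hasFDerivWithinAt_nonneg hf.hasFDerivAt.hasFDerivWithinAt hcone
  rw [ContinuousLinearMap.toSpanSingleton_apply, smul_eq_mul] at this
  exact nonpos_of_mul_nonneg_right this (sub_neg.2 hab)

theorem IsLocalMin.deriv_deriv_nonneg {f : ℝ → ℝ} {x₀ : ℝ} (h : IsLocalMin f x₀)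
    (hc : ContinuousAt f x₀) : 0 ≤ deriv (deriv f) x₀ := by
  by_contra! hneg
  have hconst : f =ᶠ[𝓝 x₀] fun _ => f x₀ := by
    filter_upwards [h, isLocalMax_of_deriv_deriv_neg hneg h.deriv_eq_zero hc] with x h₁ h₂
    exact le_antisymm h₂ h₁
  have : deriv f =ᶠ[𝓝 x₀] fun _ => 0 := by
    filter_upwards [hconst.eventuallyEq_nhds] with x hx
    rw [hx.deriv_eq, deriv_const]
  rw [this.deriv_eq, deriv_const] at hneg
  exact hneg.false

theorem deriv_mul_eq_or_eq_zero {𝕜 : Type*} [NontriviallyNormedField 𝕜] {f g : 𝕜 → 𝕜} {x : 𝕜}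
    (hg : DifferentiableAt 𝕜 g x) (hgx : g x ≠ 0) :
    deriv (fun y => f y * g y) x = deriv f x * g x + f x * deriv g x ∨
      deriv (fun y => f y * g y) x = 0 := by
  by_cases hfg : DifferentiableAt 𝕜 (fun y => f y * g y) x
  · have hquot : (fun y => f y * g y / g y) =ᶠ[𝓝 x] f := by
      filter_upwards [hg.continuousAt.eventually_ne hgx] with y hy
      exact mul_div_cancel_right₀ _ hy
    exact Or.inl (deriv_mul ((hfg.div hg hgx).congr_of_eventuallyEq hquot.symm) hg)
  · exact Or.inr (deriv_zero_of_not_differentiableAt hfg)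

theorem hasDerivAt_one_add_mul (K x : ℝ) : HasDerivAt (fun y => 1 + K * y) K x := by
  simpa using ((hasDerivAt_id x).const_mul K).const_add 1

theorem IsMinOn.hasDerivAt_le_of_exp_mul {f : ℝ → ℝ} {f' lam a t₀ : ℝ}
    (h : IsMinOn (fun t => exp (-(lam * t)) * f t) (Icc a t₀) t₀) (ha : a < t₀)
    (hf : HasDerivAt f f' t₀) : f' ≤ lam * f t₀ := by
  have hexp : HasDerivAt (fun t => exp (-(lam * t))) (exp (-(lam * t₀)) * -lam) t₀ := by
    simpa using (((hasDerivAt_id t₀).const_mul lam).neg).exp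
  have := h.hasDerivAt_nonpos_of_Icc_right ha (hexp.mul hf)
  nlinarith [exp_pos (-(lam * t₀))]

theorem IsMinOn.neg_mul_le_of_one_add_mul {f : ℝ → ℝ} {f' K b : ℝ}
    (h : IsMinOn (fun x => (1 + K * x) * f x) (Icc 0 b) 0) (hb : 0 < b)
    (hf : HasDerivAt f f' 0) : -(K * f 0) ≤ f' := by
  have := h.hasDerivAt_nonneg_of_Icc_left hb ((hasDerivAt_one_add_mul K 0).mul hf)
  simp only [mul_zero, add_zero, one_mul] at this
  linarith

theorem IsLocalMin.one_add_mul_mul_deriv_eq {f : ℝ → ℝ} {K x₀ : ℝ}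
    (h : IsLocalMin (fun x => (1 + K * x) * f x) x₀) (hf : DifferentiableAt ℝ f x₀) :
    (1 + K * x₀) * deriv f x₀ = -(K * f x₀) := by
  have := ((hasDerivAt_one_add_mul K x₀).mul hf.hasDerivAt).deriv ▸ h.deriv_eq_zero
  linarith

theorem IsLocalMin.deriv_deriv_one_add_mul_mul_nonneg {f : ℝ → ℝ} {K x₀ : ℝ}
    (h : IsLocalMin (fun x => (1 + K * x) * f x) x₀)
    (hf : ∀ᶠ x in 𝓝 x₀, DifferentiableAt ℝ f x) (hf' : DifferentiableAt ℝ (deriv f) x₀) :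
    0 ≤ 2 * K * deriv f x₀ + (1 + K * x₀) * deriv (deriv f) x₀ := by
  have hderiv : deriv (fun x => (1 + K * x) * f x) =ᶠ[𝓝 x₀]
      fun x => K * f x + (1 + K * x) * deriv f x := by
    filter_upwards [hf] with x hx
    exact ((hasDerivAt_one_add_mul K x).mul hx.hasDerivAt).deriv
  have hderiv2 : HasDerivAt (fun x => K * f x + (1 + K * x) * deriv f x)
      (K * deriv f x₀ + (K * deriv f x₀ + (1 + K * x₀) * deriv (deriv f) x₀)) x₀ :=
    (hf.self_of_nhds.hasDerivAt.const_mul K).add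
      ((hasDerivAt_one_add_mul K x₀).mul hf'.hasDerivAt)
  have := h.deriv_deriv_nonneg
    ((continuousAt_const.add (continuousAt_const.mul continuousAt_id)).mul
      hf.self_of_nhds.continuousAt)
  rw [hderiv.deriv_eq, hderiv2.deriv] at this
  linarith

theorem sum_mul_add_mul_pos {ι : Type*} [Fintype ι] {D a v : ι → ℝ} {r K C : ℝ} (hr : r < 0)
    (hD : ∀ i, 0 ≤ D i) (ha : ∀ i, -(K * r) ≤ a i) (hv : ∀ i, |v i| ≤ C)
    (hK : Fintype.card ι * C < K * ∑ i, D i) : 0 < ∑ i, (D i * a i + v i * r) := by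
  have hterm : ∀ i, D i * -(K * r) + C * r ≤ D i * a i + v i * r := fun i => by
    have hvC : v i ≤ C := (le_abs_self _).trans (hv i)
    nlinarith [mul_le_mul_of_nonneg_left (ha i) (hD i)]
  calc 0 < -r * (K * ∑ i, D i - Fintype.card ι * C) := mul_pos (by linarith) (by linarith)
    _ = ∑ i, (D i * -(K * r) + C * r) := by
      rw [Finset.sum_add_distrib, ← Finset.sum_mul, Finset.sum_const, Finset.card_univ,
        nsmul_eq_mul]; ring
    _ ≤ _ := Finset.sum_le_sum fun i _ => hterm i

/- At an interior minimum, `g, r, p, q, rt` are `1 + K x₀` and the values of `ρ, ∂ₓρ, ∂ₓ²ρ, ∂ₜρ`;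
`UX * r + U * p` is the drift term `∂ₓ(u ρ)`. -/
theorem false_of_interior_min_conditions {g r p q rt U UX F D Dmax K Cu Cux lam : ℝ} (hg : 1 ≤ g)
    (hr : r < 0) (hp : g * p = -(K * r)) (hq : 0 ≤ 2 * K * p + g * q) (hrt : rt ≤ lam * r)
    (hpde : rt = D * q + (UX * r + U * p) + F) (hF : 0 ≤ F) (hU : |U| ≤ Cu)
    (hUX : |UX| ≤ Cux) (hD : 0 < D) (hDmax : D ≤ Dmax) (hK : 0 ≤ K)
    (hlam : 2 * Dmax * K ^ 2 + Cu * K + Cux < lam) : False := by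
  obtain ⟨hU₁, -⟩ := abs_le.1 hU
  obtain ⟨-, hUX₂⟩ := abs_le.1 hUX
  have hCu : 0 ≤ Cu := (abs_nonneg U).trans hU
  set s := g ^ 2 * r
  have hs : s < 0 := mul_neg_of_pos_of_neg (by positivity) hr
  have hsr : s ≤ r := by simpa using mul_le_mul_of_nonpos_right (one_le_pow₀ hg : 1 ≤ g ^ 2) hr.le
  have hsgr : s ≤ g * r := by nlinarith
  have hdiff : 2 * Dmax * K ^ 2 * s ≤ D * (g * (g * q)) := by
    have h₁ : 2 * K ^ 2 * r ≤ g * (g * q) := by nlinarith [mul_nonneg (by linarith : 0 ≤ g) hq]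
    nlinarith [mul_le_mul_of_nonneg_left h₁ hD.le,
      mul_le_mul_of_nonneg_left hsr (by nlinarith : 0 ≤ 2 * Dmax * K ^ 2),
      mul_nonpos_of_nonneg_of_nonpos (sub_nonneg.2 hDmax) (by nlinarith : K ^ 2 * r ≤ 0)]
  have hUX' : Cux * s ≤ UX * s := by nlinarith
  have hU' : Cu * K * s ≤ U * g * (g * p) := by
    rw [hp]
    nlinarith [mul_le_mul_of_nonneg_left hsgr (mul_nonneg hCu hK),
      mul_nonneg (mul_nonneg hK (by linarith : 0 ≤ g)) (by linarith : 0 ≤ U + Cu)]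
  have : g ^ 2 * rt = D * (g * (g * q)) + UX * s + U * g * (g * p) + g ^ 2 * F := by
    rw [hpde]; ring
  nlinarith [mul_le_mul_of_nonneg_left hrt (sq_nonneg g), mul_nonneg (sq_nonneg g) hF]

namespace ClassicalSolution

variable {N : ℕ} {T : ℝ} {l D : Fin N → ℝ} {u f : Fin N → ℝ → ℝ → ℝ} {ρ0 : Fin N → ℝ → ℝ}
  {ρ : Fin N → ℝ → ℝ → ℝ}

theorem false_of_vertex_min (hρ : ClassicalSolution N T l D u f ρ0 ρ) (hl : ∀ i, 0 < l i)
    (hD : ∀ i, 0 ≤ D i) {Cu K t₀ : ℝ} (hCu : ∀ i, |u i 0 t₀| ≤ Cu)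
    (hK : N * Cu < K * ∑ i, D i) (ht₀ : t₀ ∈ Ioo 0 T) {i₀ : Fin N} (hneg : ρ i₀ 0 t₀ < 0)
    (hmin : ∀ i, ∀ x ∈ Icc 0 (l i), ρ i₀ 0 t₀ ≤ (1 + K * x) * ρ i x t₀) : False := by
  have hvertex : ∀ i, ρ i 0 t₀ = ρ i₀ 0 t₀ := fun i => by
    rcases eq_or_ne i i₀ with rfl | hi
    · rfl
    · exact hρ.vertex i i₀ hi t₀ ht₀
  have hslope : ∀ i, -(K * ρ i₀ 0 t₀) ≤ deriv (fun y => ρ i y t₀) 0 := fun i => by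
    have hminOn : IsMinOn (fun x => (1 + K * x) * ρ i x t₀) (Icc 0 (l i)) 0 := fun x hx => by
      simpa [hvertex i] using hmin i x hx
    simpa [hvertex i] using hminOn.neg_mul_le_of_one_add_mul (hl i)
      (hρ.diff_x i 0 ⟨le_rfl, (hl i).le⟩ t₀ (Ioo_subset_Icc_self ht₀)).hasDerivAt
  have hpos := sum_mul_add_mul_pos hneg hD hslope hCu (by simpa using hK)
  have hkirchhoff := hρ.kirchhoff t₀ ht₀
  simp only [hvertex] at hkirchhoff
  exact hpos.ne' hkirchhoff

theorem false_of_interior_min (hρ : ClassicalSolution N T l D u f ρ0 ρ) {i : Fin N}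
    {x₀ t₀ : ℝ} (hx₀ : x₀ ∈ Ioo 0 (l i)) (ht₀ : t₀ ∈ Ioo 0 T) (hf : 0 ≤ f i x₀ t₀)
    (hD : 0 < D i) {Cu Cux Dmax K lam : ℝ} (hCu : |u i x₀ t₀| ≤ Cu)
    (hCux : |deriv (fun y => u i y t₀) x₀| ≤ Cux) (hDmax : D i ≤ Dmax) (hK : 0 ≤ K)
    (hlam : 2 * Dmax * K ^ 2 + Cu * K + Cux < lam) (hneg : ρ i x₀ t₀ < 0)
    (hmin : IsLocalMin (fun x => (1 + K * x) * ρ i x t₀) x₀)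
    (htime : deriv (ρ i x₀) t₀ ≤ lam * ρ i x₀ t₀) : False := by
  have hx₀' := Ioo_subset_Icc_self hx₀
  have ht₀' := Ioo_subset_Icc_self ht₀
  have hdiff : ∀ᶠ x in 𝓝 x₀, DifferentiableAt ℝ (fun y => ρ i y t₀) x := by
    filter_upwards [Icc_mem_nhds hx₀.1 hx₀.2] with x hx using hρ.diff_x i x hx t₀ ht₀'
  have hg : 1 ≤ 1 + K * x₀ := le_add_of_nonneg_right (mul_nonneg hK hx₀.1.le)
  have hp := hmin.one_add_mul_mul_deriv_eq hdiff.self_of_nhds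
  have hq := hmin.deriv_deriv_one_add_mul_mul_nonneg hdiff (hρ.diff_xx i x₀ hx₀' t₀ ht₀')
  have hpde := hρ.pde i x₀ hx₀ t₀ ht₀
  -- `u i` need not be differentiable in `x`, so `∂ₓ(u ρ)` may be the junk value `0`.
  rcases deriv_mul_eq_or_eq_zero (f := fun y => u i y t₀) hdiff.self_of_nhds hneg.ne with
    hprod | hprod
  · exact false_of_interior_min_conditions hg hneg hp hq htime (hprod ▸ hpde) hf hCu hCux hD
      hDmax hK hlam
  · exact false_of_interior_min_conditions (U := 0) (UX := 0) hg hneg hp hq htime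
      (by simpa [hprod] using hpde) hf (by simpa using (abs_nonneg _).trans hCu)
      (by simpa using (abs_nonneg _).trans hCux) hD hDmax hK hlam

theorem nonneg_of_weighted_min (hρ : ClassicalSolution N T l D u f ρ0 ρ) (hl : ∀ i, 0 < l i)
    (hD : ∀ i, 0 < D i) (hf : ∀ i, ∀ x ∈ Ioo 0 (l i), ∀ t ∈ Ioo 0 T, 0 ≤ f i x t)
    (hρ0 : ∀ i, ∀ x ∈ Icc 0 (l i), 0 ≤ ρ0 i x) {Cu Cux Dmax K lam s : ℝ}
    (hCu : ∀ i, ∀ p ∈ Icc 0 (l i) ×ˢ Icc 0 T, |u i p.1 p.2| ≤ Cu)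
    (hCux : ∀ i, ∀ p ∈ Icc 0 (l i) ×ˢ Icc 0 T, |deriv (fun y => u i y p.2) p.1| ≤ Cux)
    (hDmax : ∀ i, D i ≤ Dmax) (hK₀ : 0 ≤ K) (hK : N * Cu < K * ∑ i, D i)
    (hlam : 2 * Dmax * K ^ 2 + Cu * K + Cux < lam) (hs : s < T) {i₀ : Fin N} {x₀ t₀ : ℝ}
    (hx₀ : x₀ ∈ Icc 0 (l i₀)) (ht₀ : t₀ ∈ Icc 0 s)
    (hmin : ∀ i, ∀ x ∈ Icc 0 (l i), ∀ t ∈ Icc 0 s, exp (-(lam * t₀)) *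
      ((1 + K * x₀) * ρ i₀ x₀ t₀) ≤ exp (-(lam * t)) * ((1 + K * x) * ρ i x t)) :
    0 ≤ ρ i₀ x₀ t₀ := by
  by_contra! hneg
  have hsT : Icc 0 s ⊆ Icc 0 T := Icc_subset_Icc_right hs.le
  have ht₀pos : 0 < t₀ := ht₀.1.lt_of_ne <| by
    rintro rfl
    exact hneg.not_ge (hρ.init i₀ x₀ hx₀ ▸ hρ0 i₀ x₀ hx₀)
  have ht₀T : t₀ ∈ Ioo 0 T := ⟨ht₀pos, ht₀.2.trans_lt hs⟩
  have hx₀l : x₀ < l i₀ := hx₀.2.lt_of_ne <| by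
    rintro rfl
    exact hneg.ne (hρ.dirichlet i₀ t₀ ht₀T)
  have hspace : ∀ i, ∀ x ∈ Icc 0 (l i), (1 + K * x₀) * ρ i₀ x₀ t₀ ≤ (1 + K * x) * ρ i x t₀ :=
    fun i x hx => (mul_le_mul_iff_right₀ (exp_pos _)).1 (hmin i x hx t₀ ht₀)
  rcases hx₀.1.eq_or_lt with rfl | hx₀pos
  · exact hρ.false_of_vertex_min hl (fun i => (hD i).le)
      (fun i => hCu i (0, t₀) ⟨⟨le_rfl, (hl i).le⟩, hsT ht₀⟩) hK ht₀T hneg (by simpa using hspace)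
  have hg : 0 < 1 + K * x₀ := by positivity
  have htime : IsMinOn (fun t => exp (-(lam * t)) * ρ i₀ x₀ t) (Icc 0 t₀) t₀ := fun t ht => by
    have := hmin i₀ x₀ hx₀ t ⟨ht.1, ht.2.trans ht₀.2⟩
    rw [mul_left_comm, mul_left_comm (exp _)] at this
    exact (mul_le_mul_iff_right₀ hg).1 this
  have hspace' : IsMinOn (fun x => (1 + K * x) * ρ i₀ x t₀) (Icc 0 (l i₀)) x₀ := hspace i₀
  exact hρ.false_of_interior_min ⟨hx₀pos, hx₀l⟩ ht₀T (hf i₀ x₀ ⟨hx₀pos, hx₀l⟩ t₀ ht₀T) (hD i₀)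
    (hCu i₀ (x₀, t₀) ⟨hx₀, hsT ht₀⟩) (hCux i₀ (x₀, t₀) ⟨hx₀, hsT ht₀⟩) (hDmax i₀) hK₀ hlam hneg
    (hspace'.isLocalMin (Icc_mem_nhds hx₀pos hx₀l))
    (htime.hasDerivAt_le_of_exp_mul ht₀pos (hρ.diff_t i₀ x₀ hx₀ t₀ (hsT ht₀)).hasDerivAt)

theorem nonneg_of_lt (hρ : ClassicalSolution N T l D u f ρ0 ρ) (hl : ∀ i, 0 < l i)
    (hD : ∀ i, 0 < D i) (hf : ∀ i, ∀ x ∈ Ioo 0 (l i), ∀ t ∈ Ioo 0 T, 0 ≤ f i x t)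
    (hρ0 : ∀ i, ∀ x ∈ Icc 0 (l i), 0 ≤ ρ0 i x) {Cu Cux : ℝ} (hCu₀ : 0 ≤ Cu)
    (hCu : ∀ i, ∀ p ∈ Icc 0 (l i) ×ˢ Icc 0 T, |u i p.1 p.2| ≤ Cu)
    (hCux : ∀ i, ∀ p ∈ Icc 0 (l i) ×ˢ Icc 0 T, |deriv (fun y => u i y p.2) p.1| ≤ Cux)
    {s : ℝ} (hs : s < T) (i : Fin N) : ∀ x ∈ Icc 0 (l i), ∀ t ∈ Icc 0 s, 0 ≤ ρ i x t := by
  intro x hx t ht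
  have : Nonempty (Fin N) := ⟨i⟩
  obtain ⟨Dmax, hDmax⟩ := Finite.bddAbove_range D
  have hDsum : 0 < ∑ j, D j := Finset.sum_pos (fun j _ => hD j) Finset.univ_nonempty
  have hK₀ : 0 ≤ (N * Cu + 1) / ∑ j, D j := by positivity
  set K := (N * Cu + 1) / ∑ j, D j
  set lam := 2 * Dmax * K ^ 2 + Cu * K + Cux + 1
  obtain ⟨i₀, ⟨x₀, t₀⟩, ⟨hx₀, ht₀⟩, hmin⟩ := exists_forall_le_of_isCompact
    (s := fun j => Icc 0 (l j) ×ˢ Icc 0 s)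
    (f := fun j p => exp (-(lam * p.2)) * ((1 + K * p.1) * ρ j p.1 p.2))
    (fun j => isCompact_Icc.prod isCompact_Icc)
    (fun j => ⟨(0, 0), ⟨le_rfl, (hl j).le⟩, ⟨le_rfl, ht.1.trans ht.2⟩⟩)
    (fun j => ContinuousOn.mul (by fun_prop) (ContinuousOn.mul (by fun_prop)
      ((hρ.cont j).mono (prod_mono_right (Icc_subset_Icc_right hs.le)))))
  have hρ₀ := hρ.nonneg_of_weighted_min hl hD hf hρ0 hCu hCux (fun j => hDmax ⟨j, rfl⟩)
    hK₀ (by rw [div_mul_cancel₀ _ hDsum.ne']; linarith) (lt_add_one _) hs hx₀ ht₀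
    (fun j x hx t ht => hmin j (x, t) ⟨hx, ht⟩)
  have hg₀ : 0 ≤ 1 + K * x₀ := add_nonneg zero_le_one (mul_nonneg hK₀ hx₀.1)
  have hw := (mul_nonneg (exp_pos _).le (mul_nonneg hg₀ hρ₀)).trans (hmin i (x, t) ⟨hx, ht⟩)
  exact nonneg_of_mul_nonneg_right (nonneg_of_mul_nonneg_right hw (exp_pos _))
    (add_pos_of_pos_of_nonneg one_pos (mul_nonneg hK₀ hx.1))

end ClassicalSolution

theorem positivity_preservation_general
    (N : ℕ) (T : ℝ)
    (l D : Fin N → ℝ) (hl : ∀ i, 0 < l i) (hD : ∀ i, 0 < D i)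
    (u : Fin N → ℝ → ℝ → ℝ)
    (hu_cont : ∀ i, ContinuousOn (fun p : ℝ × ℝ => u i p.1 p.2)
      (Icc 0 (l i) ×ˢ Icc 0 T))
    (hux_cont : ∀ i, ContinuousOn (fun p : ℝ × ℝ => deriv (fun y => u i y p.2) p.1)
      (Icc 0 (l i) ×ˢ Icc 0 T))
    (ρ0 : Fin N → ℝ → ℝ) (ρ : Fin N → ℝ → ℝ → ℝ)
    (hρ : ClassicalSolution N T l D u (fun _ _ _ => 0) ρ0 ρ)
    (hρ0 : ∀ i, ∀ x ∈ Icc 0 (l i), 0 ≤ ρ0 i x) :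
    ∀ i, ∀ x ∈ Icc 0 (l i), ∀ t ∈ Icc 0 T, 0 ≤ ρ i x t := by
  obtain ⟨Cu, hCu₀, hCu⟩ :=
    exists_abs_le_of_continuousOn (fun i => isCompact_Icc.prod isCompact_Icc) hu_cont
  obtain ⟨Cux, -, hCux⟩ :=
    exists_abs_le_of_continuousOn (fun i => isCompact_Icc.prod isCompact_Icc) hux_cont
  have hbefore : ∀ s < T, ∀ i, ∀ x ∈ Icc 0 (l i), ∀ t ∈ Icc 0 s, 0 ≤ ρ i x t := fun s hs =>
    hρ.nonneg_of_lt hl hD (fun _ _ _ _ _ => le_rfl) hρ0 hCu₀ hCu hCux hs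
  intro i x hx t ht
  rcases ht.1.eq_or_lt with rfl | htpos
  · exact hρ.init i x hx ▸ hρ0 i x hx
  have hcont : ContinuousOn (ρ i x) (Icc 0 T) :=
    (hρ.cont i).comp (continuous_const.prodMk continuous_id).continuousOn fun _ hτ => ⟨hx, hτ⟩
  refine continuousWithinAt_const.closure_le (closure_Ico htpos.ne ▸ right_mem_Icc.2 htpos.le)
    ((hcont t ht).mono (Ico_subset_Icc_self.trans (Icc_subset_Icc_right ht.2)))
    fun τ hτ => hbefore τ (hτ.2.trans_le ht.2) i x hx τ ⟨hτ.1, le_rfl⟩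

/-- **Positivity preservation for the Fokker–Planck system on a star graph.**
If `ρ` is a classical solution with `f ≡ 0` and nonnegative initial data, then
`ρ i x t ≥ 0` on `[0, l i] × [0, T]` for every edge `i`. -/
theorem positivity_preservation
    (N : ℕ) (hN : 0 < N) (T : ℝ) (hT : 0 < T)
    (l D : Fin N → ℝ) (hl : ∀ i, 0 < l i) (hD : ∀ i, 0 < D i)
    (u : Fin N → ℝ → ℝ → ℝ)
    (hu_cont : ∀ i, ContinuousOn (fun p : ℝ × ℝ => u i p.1 p.2)
      (Icc 0 (l i) ×ˢ Icc 0 T))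
    (hu_bdd : ∀ i, ∃ C, ∀ x ∈ Icc 0 (l i), ∀ t ∈ Icc 0 T, |u i x t| ≤ C)
    (hux_cont : ∀ i, ContinuousOn (fun p : ℝ × ℝ => deriv (fun y => u i y p.2) p.1)
      (Icc 0 (l i) ×ˢ Icc 0 T))
    (ρ0 : Fin N → ℝ → ℝ) (ρ : Fin N → ℝ → ℝ → ℝ)
    (hρ : ClassicalSolution N T l D u (fun _ _ _ => 0) ρ0 ρ)
    (hρ0 : ∀ i, ∀ x ∈ Icc 0 (l i), 0 ≤ ρ0 i x) :
    ∀ i, ∀ x ∈ Icc 0 (l i), ∀ t ∈ Icc 0 T, 0 ≤ ρ i x t :=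
  positivity_preservation_general N T l D hl hD u hu_cont hux_cont ρ0 ρ hρ hρ0
end

section
/- Exact left integral of the shifted Legendre scaling functions (Result 1): for all J ≥ 1, n ∈ {1, …, 2^{J−1}}, natural m, and t ∈ [0,1], the left integral ∫_0^t φ_{n,m}^J(s) ds equals: 0 if t ≤ (n−1)/2^{J−1}; √((2m+1)/2^{J−1}) ∑_{i=0}^{m} ( c_{i,m}/(i+1) ) (2^{J−1} t − n + 1)^{i+1} if (n−1)/2^{J−1} < t < n/2^{J−1}; √(1/2^{J−1}) if t ≥ n/2^{J−1} and m = 0; and 0 if t ≥ n/2^{J−1} and m ≥ 1. -/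
open MeasureTheory

/-- The coefficients `c_{i,m}` of the shifted Legendre polynomials:
`c_{i,m} = (∏_{j=0}^{m−1} (1+i+j)) / (∏_{j=0, j≠i}^{m} (i−j))` (and `c_{0,0} = 1`). -/
noncomputable def legendreCoeff (m i : ℕ) : ℝ :=
  (∏ j ∈ Finset.range m, ((1 : ℝ) + i + j)) /
    (∏ j ∈ (Finset.range (m + 1)).erase i, ((i : ℝ) - j))

/-- The shifted Legendre polynomial `L_m(t) = ∑_{i=0}^{m} c_{i,m} t^i` on `[0,1]`. -/
noncomputable def shiftedLegendre (m : ℕ) (t : ℝ) : ℝ :=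
  ∑ i ∈ Finset.range (m + 1), legendreCoeff m i * t ^ i

/-- The shifted Legendre scaling function `φ_{n,m}^J` on `[0,1]`:
`φ_{n,m}^J(t) = 2^{(J−1)/2} √(2m+1) L_m(2^{J−1} t − n + 1)` on
`[(n−1)/2^{J−1}, n/2^{J−1})`, and `0` otherwise. -/
noncomputable def scalingFun (J n m : ℕ) (t : ℝ) : ℝ :=
  if ((n : ℝ) - 1) / 2 ^ (J - 1) ≤ t ∧ t < (n : ℝ) / 2 ^ (J - 1) then
    Real.sqrt (2 ^ (J - 1)) * Real.sqrt (2 * m + 1) *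
      shiftedLegendre m (2 ^ (J - 1) * t - n + 1)
  else 0

/-! On its support `φ_{n,m}^J` is an affine reparametrisation of `L_m` onto `[0,1]`, so
`∫₀ᵗ φ` is `√((2m+1)/2^{J-1})` times the primitive `P_m(y) = ∑ c_{i,m}/(i+1) y^{i+1}` of `L_m`,
evaluated at the image of `t` clamped to the support. The three regimes are `P_m(0) = 0`, the
formula itself, and `P_m(1) = ∫₀¹ L_m`. The latter vanishes for `m ≥ 1`: from the closed form
`c_{i,m} = (-1)^{m-i} (m+i)! / ((i!)² (m-i)!)` one gets `(i+1)² c_{i+1,m} = -(m-i)(m+i+1) c_{i,m}`,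
which turns `m(m+1) c_{i,m}/(i+1) = i c_{i,m} - (i+1) c_{i+1,m}` into a telescoping sum. -/

open Set
open scoped Nat

theorem factorial_mul_prod_range_one_add_add (m i : ℕ) :
    (i ! : ℝ) * ∏ j ∈ Finset.range m, ((1 : ℝ) + i + j) = (i + m)! := by
  induction m with
  | zero => simp
  | succ m ih =>
    rw [Finset.prod_range_succ, ← mul_assoc, ih, ← add_assoc, Nat.factorial_succ]
    push_cast
    ring

theorem prod_range_sub_eq_factorial (i : ℕ) : ∏ j ∈ Finset.range i, ((i : ℝ) - j) = i ! := by
  rw [← Nat.descFactorial_self, Nat.descFactorial_eq_prod_range]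
  push_cast
  exact Finset.prod_congr rfl fun j hj => by
    rw [Nat.cast_sub (Finset.mem_range.1 hj).le]

theorem prod_erase_range_sub {m i : ℕ} (h : i ≤ m) :
    ∏ j ∈ (Finset.range (m + 1)).erase i, ((i : ℝ) - j) = (-1) ^ (m - i) * i ! * (m - i)! := by
  have hsplit : (Finset.range (m + 1)).erase i =
      Finset.range i ∪ (Finset.range (m - i)).map (addLeftEmbedding (i + 1)) := by
    ext j
    simp only [Finset.mem_erase, Finset.mem_range, Finset.mem_union, Finset.mem_map,
      addLeftEmbedding_apply]
    constructor
    · intro hj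
      by_cases hji : j < i
      · exact Or.inl hji
      · exact Or.inr ⟨j - (i + 1), by omega, by omega⟩
    · rintro (hj | ⟨k, hk, rfl⟩) <;> omega
  have hdisj :
      Disjoint (Finset.range i) ((Finset.range (m - i)).map (addLeftEmbedding (i + 1))) := by
    simp only [Finset.disjoint_left, Finset.mem_range, Finset.mem_map, addLeftEmbedding_apply]
    rintro j hj ⟨k, -, rfl⟩
    omega
  have hupper : ∏ k ∈ Finset.range (m - i), ((i : ℝ) - (i + 1 + k : ℕ)) =
      (-1) ^ (m - i) * (m - i)! :=
    calc ∏ k ∈ Finset.range (m - i), ((i : ℝ) - (i + 1 + k : ℕ))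
        = ∏ k ∈ Finset.range (m - i), ((-1) * ((k : ℝ) + 1)) :=
          Finset.prod_congr rfl fun k _ => by push_cast; ring
      _ = (-1) ^ (m - i) * (m - i)! := by
          rw [Finset.prod_mul_distrib, Finset.prod_const, Finset.card_range]
          congr 1
          exact_mod_cast Finset.prod_range_add_one_eq_factorial (m - i)
  rw [hsplit, Finset.prod_union hdisj, prod_range_sub_eq_factorial, Finset.prod_map]
  simp only [addLeftEmbedding_apply]
  rw [hupper]
  ring

theorem legendreCoeff_eq {m i : ℕ} (h : i ≤ m) :
    legendreCoeff m i = (-1) ^ (m - i) * (i + m)! / ((i ! : ℝ) ^ 2 * (m - i)!) := by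
  have hnum := factorial_mul_prod_range_one_add_add m i
  rw [legendreCoeff, prod_erase_range_sub h]
  have hsign : ((-1 : ℝ) ^ (m - i)) ^ 2 = 1 := by
    rw [← pow_mul, mul_comm, pow_mul, neg_one_sq, one_pow]
  field_simp
  linear_combination hnum - (i + m)! * hsign

theorem legendreCoeff_succ {m i : ℕ} (h : i < m) :
    ((i : ℝ) + 1) ^ 2 * legendreCoeff m (i + 1) =
      -(((m : ℝ) - i) * (m + i + 1)) * legendreCoeff m i := by
  obtain ⟨k, rfl⟩ := Nat.exists_eq_add_of_lt h
  rw [legendreCoeff_eq h, legendreCoeff_eq h.le, show i + k + 1 - (i + 1) = k by omega,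
    show i + k + 1 - i = k + 1 by omega, show i + 1 + (i + k + 1) = i + (i + k + 1) + 1 by omega]
  simp only [Nat.factorial_succ, pow_succ]
  push_cast
  field_simp
  ring

theorem sum_legendreCoeff_div_eq_zero {m : ℕ} (hm : m ≠ 0) :
    ∑ i ∈ Finset.range (m + 1), legendreCoeff m i / ((i : ℝ) + 1) = 0 := by
  have hm' : (m : ℝ) * (m + 1) ≠ 0 := by positivity
  have step : ∀ i ∈ Finset.range m, (m : ℝ) * (m + 1) * (legendreCoeff m i / (i + 1)) =
      i * legendreCoeff m i - ((i + 1 : ℕ) : ℝ) * legendreCoeff m (i + 1) := by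
    intro i hi
    have := legendreCoeff_succ (Finset.mem_range.1 hi)
    push_cast
    field_simp
    linear_combination this
  rw [← mul_right_inj' hm', mul_zero, Finset.mul_sum, Finset.sum_range_succ,
    Finset.sum_congr rfl step, Finset.sum_range_sub']
  field_simp
  simp

noncomputable def legendrePrimitive (m : ℕ) (y : ℝ) : ℝ :=
  ∑ i ∈ Finset.range (m + 1), legendreCoeff m i / ((i : ℝ) + 1) * y ^ (i + 1)

theorem legendrePrimitive_zero (m : ℕ) : legendrePrimitive m 0 = 0 := by
  simp [legendrePrimitive]

theorem legendrePrimitive_one_of_ne_zero {m : ℕ} (hm : m ≠ 0) : legendrePrimitive m 1 = 0 := by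
  simpa [legendrePrimitive] using sum_legendreCoeff_div_eq_zero hm

theorem legendrePrimitive_zero_one : legendrePrimitive 0 1 = 1 := by
  simp [legendrePrimitive, legendreCoeff]

theorem integral_shiftedLegendre (m : ℕ) (y : ℝ) :
    ∫ s in (0 : ℝ)..y, shiftedLegendre m s = legendrePrimitive m y := by
  unfold shiftedLegendre
  rw [intervalIntegral.integral_finsetSum fun i _ =>
    ((continuous_pow i).const_mul (legendreCoeff m i)).intervalIntegrable 0 y]
  refine Finset.sum_congr rfl fun i _ => ?_
  rw [intervalIntegral.integral_const_mul, integral_pow]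
  ring

theorem intervalIntegral.integral_indicator_Ico {E : Type*} [NormedAddCommGroup E]
    [NormedSpace ℝ E] {g : ℝ → E} {a b c : ℝ} (hca : c ≤ a) (t : ℝ) :
    ∫ s in c..t, (Ico a b).indicator g s = ∫ s in a..max a (min t b), g s := by
  have hIoc (u v : ℝ) :
      ∫ s in Ioc u v, (Ico a b).indicator g s = ∫ s in Ioc (max u a) (min v b), g s := by
    rw [setIntegral_indicator measurableSet_Ico, ← Ioc_inter_Ioc]
    exact setIntegral_congr_set ((ae_eq_refl _).inter Ico_ae_eq_Ioc)
  have hempty : Ioc (max t a) (min c b) = ∅ :=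
    Ioc_eq_empty (not_lt.2 ((min_le_left c b).trans (hca.trans (le_max_right t a))))
  have hclamp : Ioc a (min t b) = Ioc a (max a (min t b)) := by
    rcases le_total a (min t b) with h | h
    · rw [max_eq_right h]
    · rw [max_eq_left h, Ioc_self, Ioc_eq_empty (not_lt.2 h)]
  rw [intervalIntegral, hIoc, hIoc, hempty, setIntegral_empty, sub_zero,
    max_eq_right hca, hclamp, intervalIntegral.integral_of_le (le_max_left _ _)]

theorem scalingFun_eq_indicator (J n m : ℕ) :
    scalingFun J n m = (Ico (((n : ℝ) - 1) / 2 ^ (J - 1)) ((n : ℝ) / 2 ^ (J - 1))).indicator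
      fun s => √(2 ^ (J - 1)) * √(2 * m + 1) * shiftedLegendre m (2 ^ (J - 1) * s - n + 1) := by
  ext s
  simp only [scalingFun, indicator_apply, mem_Ico]

theorem integral_scalingFun (J m : ℕ) {n : ℕ} (hn : 1 ≤ n) (t : ℝ) :
    ∫ s in (0 : ℝ)..t, scalingFun J n m s =
      √((2 * m + 1) / 2 ^ (J - 1)) * legendrePrimitive m (2 ^ (J - 1) *
        max (((n : ℝ) - 1) / 2 ^ (J - 1)) (min t ((n : ℝ) / 2 ^ (J - 1))) - n + 1) := by
  rw [scalingFun_eq_indicator]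
  set K : ℝ := 2 ^ (J - 1)
  have hK : 0 < K := by positivity
  have ha : 0 ≤ ((n : ℝ) - 1) / K := div_nonneg (sub_nonneg.2 (by exact_mod_cast hn)) hK.le
  have hshift (s : ℝ) : K * s - n + 1 = K * s - (n - 1) := by ring
  have hsqrt : √K * √(2 * m + 1) * K⁻¹ = √((2 * m + 1) / K) := by
    rw [Real.sqrt_div' _ hK.le]
    field_simp
    rw [Real.sq_sqrt hK.le]
  rw [intervalIntegral.integral_indicator_Ico ha]
  simp only [hshift]
  rw [intervalIntegral.integral_const_mul, intervalIntegral.integral_comp_mul_sub _ hK.ne',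
    mul_div_cancel₀ _ hK.ne', sub_self, integral_shiftedLegendre, smul_eq_mul, ← mul_assoc, hsqrt]

theorem scalingFun_left_integral_general (J : ℕ) (n : ℕ)
    (hn : 1 ≤ n) (m : ℕ) (t : ℝ) :
    (t ≤ ((n : ℝ) - 1) / 2 ^ (J - 1) →
      (∫ s in (0:ℝ)..t, scalingFun J n m s) = 0) ∧
    (((n : ℝ) - 1) / 2 ^ (J - 1) < t → t < (n : ℝ) / 2 ^ (J - 1) →
      (∫ s in (0:ℝ)..t, scalingFun J n m s) =
        Real.sqrt ((2 * m + 1) / 2 ^ (J - 1)) *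
          ∑ i ∈ Finset.range (m + 1),
            legendreCoeff m i / (i + 1) * (2 ^ (J - 1) * t - n + 1) ^ (i + 1)) ∧
    ((n : ℝ) / 2 ^ (J - 1) ≤ t → m = 0 →
      (∫ s in (0:ℝ)..t, scalingFun J n m s) = Real.sqrt (1 / 2 ^ (J - 1))) ∧
    ((n : ℝ) / 2 ^ (J - 1) ≤ t → 1 ≤ m →
      (∫ s in (0:ℝ)..t, scalingFun J n m s) = 0) := by
  rw [integral_scalingFun J m hn]
  set K : ℝ := 2 ^ (J - 1)
  have hK : K ≠ 0 := by positivity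
  have hab : ((n : ℝ) - 1) / K ≤ n / K := by gcongr; linarith
  have hleft : K * (((n : ℝ) - 1) / K) - n + 1 = 0 := by field_simp; ring
  have hright : K * ((n : ℝ) / K) - n + 1 = 1 := by field_simp; ring
  refine ⟨fun h => ?_, fun h₁ h₂ => ?_, fun h hm => ?_, fun h hm => ?_⟩
  · rw [max_eq_left (min_le_left _ _ |>.trans h), hleft, legendrePrimitive_zero, mul_zero]
  · rw [min_eq_left h₂.le, max_eq_right h₁.le]
    rfl
  · subst hm
    rw [min_eq_right h, max_eq_right hab, hright, legendrePrimitive_zero_one]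
    norm_num
  · rw [min_eq_right h, max_eq_right hab, hright, legendrePrimitive_one_of_ne_zero (by omega),
      mul_zero]

/-- **Exact left integral of the shifted Legendre scaling functions (Result 1)**:
for `J ≥ 1`, `n ∈ {1, …, 2^{J−1}}`, `m : ℕ` and `t ∈ [0,1]`, the integral
`∫₀ᵗ φ_{n,m}^J(s) ds` is given piecewise. -/
theorem scalingFun_left_integral (J : ℕ) (hJ : 1 ≤ J) (n : ℕ)
    (hn : 1 ≤ n) (hn2 : n ≤ 2 ^ (J - 1)) (m : ℕ) (t : ℝ) (ht : t ∈ Set.Icc (0:ℝ) 1) :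
    (t ≤ ((n : ℝ) - 1) / 2 ^ (J - 1) →
      (∫ s in (0:ℝ)..t, scalingFun J n m s) = 0) ∧
    (((n : ℝ) - 1) / 2 ^ (J - 1) < t → t < (n : ℝ) / 2 ^ (J - 1) →
      (∫ s in (0:ℝ)..t, scalingFun J n m s) =
        Real.sqrt ((2 * m + 1) / 2 ^ (J - 1)) *
          ∑ i ∈ Finset.range (m + 1),
            legendreCoeff m i / (i + 1) * (2 ^ (J - 1) * t - n + 1) ^ (i + 1)) ∧
    ((n : ℝ) / 2 ^ (J - 1) ≤ t → m = 0 →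
      (∫ s in (0:ℝ)..t, scalingFun J n m s) = Real.sqrt (1 / 2 ^ (J - 1))) ∧
    ((n : ℝ) / 2 ^ (J - 1) ≤ t → 1 ≤ m →
      (∫ s in (0:ℝ)..t, scalingFun J n m s) = 0) :=
  scalingFun_left_integral_general J n hn m t
end
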